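/- Let n = 2k with k ≥ 2, identify the vertex set with Z_{2k}, and for each 0 ≤ i ≤ k−1 let H_i be the complete 3-partite 3-graph with parts {i, i+k}, {i+1, ..., i+k−1}, and {i+k+1, ..., i−1} (indices mod 2k). Then every 3-subset of Z_{2k} lies in an odd number of the hypergraphs H_0, ..., H_{k−1}. Moreover, a 3-set containing a pair of opposite points i, i+k lies in exactly one H_j, and a 3-set {0, b, c} with 0 < b < k < c < 2k and no opposite pair lies in three of the H_i if k < c < k+b and in exactly one otherwise. -/

import Mathlib

/-!
The part of `H_j` containing a vertex `x` depends only on `x - j`. Hence `H_{j+t}` is the rotation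
of `H_j` by `t`, and `H_{j+k}` is `H_j` with its two arcs exchanged, so the number of `j < k` with
`e ∈ H_j` is half the number of such `j ∈ ℤ/2k` and does not change when `e` is rotated.

A triple `{x, x + k, a}` lies in `H_j` exactly when `a ∈ {j, j + k}`, i.e. only for `j = a mod k`.
A triple without an opposite pair is a rotation of some `{0, b, c}` with `0 < b < k < c` (rotate
to `0` a point whose diameter separates the other two), and such a triple lies in `H_0`, and in
`H_b` and `H_{c-k}` exactly when `c < k + b`.
-/

open Finset

/-- `e` is an edge of the complete `r`-partite `r`-graph with parts `P 0, ..., P (r-1)`: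
it meets every part in exactly one vertex. -/
def IsEdge {α : Type*} [DecidableEq α] {r : ℕ} (P : Fin r → Finset α) (e : Finset α) : Prop :=
  ∀ i, (e ∩ P i).card = 1

instance {α : Type*} [DecidableEq α] {r : ℕ} (P : Fin r → Finset α) (e : Finset α) :
    Decidable (IsEdge P e) :=
  inferInstanceAs (Decidable (∀ _, _))

/-- The circular construction `H_i` on `ZMod (2k)`: parts `{i, i+k}`,
`{i+1, ..., i+k-1}` and `{i+k+1, ..., i-1}`. -/
def circPart (k : ℕ) (i : ZMod (2 * k)) : Fin 3 → Finset (ZMod (2 * k)) :=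
  ![{i, i + (k : ZMod (2 * k))},
    (Finset.Ico 1 k).image fun j : ℕ => i + (j : ZMod (2 * k)),
    (Finset.Ico (k + 1) (2 * k)).image fun j : ℕ => i + (j : ZMod (2 * k))]

lemma Nat.mod_eq_or_mod_add_eq_of_lt_two_mul {m n : ℕ} (h : m < 2 * n) :
    m % n = m ∨ m % n + n = m := by
  rcases Nat.lt_or_ge m n with hmn | hmn
  · exact .inl (Nat.mod_eq_of_lt hmn)
  · rw [Nat.mod_eq_sub_mod hmn, Nat.mod_eq_of_lt (by omega)]
    omega

lemma ZMod.val_sub_add_val_eq_or {n : ℕ} [NeZero n] (u w : ZMod n) :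
    (u - w).val + w.val = u.val ∨ (u - w).val + w.val = u.val + n := by
  have h := ZMod.val_add (u - w) w
  rw [sub_add_cancel] at h
  have := Nat.mod_eq_or_mod_add_eq_of_lt_two_mul (n := n)
    (by linarith [(u - w).val_lt, w.val_lt] : (u - w).val + w.val < 2 * n)
  omega

lemma ZMod.val_eq_iff_eq_natCast {n : ℕ} [NeZero n] {v : ZMod n} {m : ℕ} (hm : m < n) :
    v.val = m ↔ v = m := by
  constructor
  · intro h
    rw [← ZMod.natCast_zmod_val v, h]
  · rintro rfl
    exact ZMod.val_natCast_of_lt hm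

lemma ZMod.mem_image_add_natCast_iff {n : ℕ} [NeZero n] {s : Finset ℕ} (hs : ∀ m ∈ s, m < n)
    (j x : ZMod n) : x ∈ s.image (fun m : ℕ => j + m) ↔ (x - j).val ∈ s := by
  rw [mem_image]
  constructor
  · rintro ⟨m, hm, rfl⟩
    rwa [add_sub_cancel_left, ZMod.val_natCast_of_lt (hs m hm)]
  · intro h
    exact ⟨_, h, by rw [ZMod.natCast_zmod_val, add_sub_cancel]⟩

lemma ZMod.val_natCast_half {n : ℕ} [NeZero n] : (n : ZMod (2 * n)).val = n :=
  ZMod.val_natCast_of_lt (by have := NeZero.pos n; omega)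

lemma ZMod.natCast_half_add_self (n : ℕ) : (n : ZMod (2 * n)) + n = 0 := by
  rw [← Nat.cast_add, ← two_mul, ZMod.natCast_self]

section IsEdge

variable {α : Type*} [DecidableEq α]

lemma isEdge_comp_perm {r : ℕ} (P : Fin r → Finset α) (σ : Equiv.Perm (Fin r))
    (e : Finset α) :
    IsEdge (P ∘ σ) e ↔ IsEdge P e :=
  σ.forall_congr fun _ => Iff.rfl

lemma isEdge_image_iff {β : Type*} [DecidableEq β] {r : ℕ} {f : α → β}
    (hf : Function.Injective f) (P : Fin r → Finset α) (e : Finset α) :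
    IsEdge (fun i => (P i).image f) (e.image f) ↔ IsEdge P e := by
  simp only [IsEdge, ← image_inter _ _ hf, card_image_of_injective _ hf]

lemma isEdge_triple_iff (P : Fin 3 → Finset α) (f : α → Fin 3)
    (hP : ∀ x i, x ∈ P i ↔ f x = i) {x y z : α} (hxy : x ≠ y) (hxz : x ≠ z)
    (hyz : y ≠ z) :
    IsEdge P {x, y, z} ↔ f x ≠ f y ∧ f x ≠ f z ∧ f y ≠ f z := by
  have hcard : ∀ i, (({x, y, z} : Finset α) ∩ P i).card =
      (if f x = i then 1 else 0) + (if f y = i then 1 else 0) + (if f z = i then 1 else 0) := by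
    intro i
    rw [← filter_mem_eq_inter, filter_insert, filter_insert, filter_singleton]
    simp only [hP]
    split_ifs <;> simp [hxy, hxz, hyz]
  simp only [IsEdge, hcard]
  generalize f x = a, f y = b, f z = c
  revert a b c
  decide

end IsEdge

def circPartIndex (k v : ℕ) : Fin 3 := if v = 0 ∨ v = k then 0 else if v < k then 1 else 2

lemma circPartIndex_ne_iff (k v w : ℕ) : circPartIndex k v ≠ circPartIndex k w ↔
    ¬(((v = 0 ∨ v = k) ∧ (w = 0 ∨ w = k)) ∨
      (¬(v = 0 ∨ v = k) ∧ ¬(w = 0 ∨ w = k) ∧ (v < k ↔ w < k))) := by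
  unfold circPartIndex
  split_ifs <;> simp_all
  all_goals omega

lemma circPartIndex_eq_zero_iff (k v : ℕ) : circPartIndex k v = 0 ↔ v = 0 ∨ v = k := by
  unfold circPartIndex
  split_ifs <;> simp_all

def coverCount (k : ℕ) (e : Finset (ZMod (2 * k))) : ℕ :=
  #((range k).filter fun i : ℕ => IsEdge (circPart k i) e)

section circPart

variable {k : ℕ} [NeZero k]

lemma mem_circPart_iff (j x : ZMod (2 * k)) (i : Fin 3) :
    x ∈ circPart k j i ↔ circPartIndex k (x - j).val = i := by
  have hk := NeZero.pos k
  have hlt := (x - j).val_lt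
  have hpair : ({j, j + (k : ZMod (2 * k))} : Finset _) =
      ({0, k} : Finset ℕ).image fun m : ℕ => j + (m : ZMod (2 * k)) := by
    simp
  fin_cases i <;>
  · simp only [circPart, hpair, Fin.isValue, Fin.zero_eta, Fin.mk_one, Fin.reduceFinMk,
      Matrix.cons_val_zero, Matrix.cons_val_one, Matrix.cons_val]
    rw [ZMod.mem_image_add_natCast_iff (fun m hm => by simp at hm; omega)]
    generalize (x - j).val = v at hlt ⊢
    simp only [circPartIndex, mem_insert, mem_singleton, mem_Ico]
    split_ifs <;> simp <;> omega

lemma circPartIndex_val_add_natCast (v : ZMod (2 * k)) :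
    circPartIndex k (v + (k : ZMod (2 * k))).val = Equiv.swap 1 2 (circPartIndex k v.val) := by
  have hv := v.val_lt
  have hvk := (v + (k : ZMod (2 * k))).val_lt
  have := ZMod.val_sub_add_val_eq_or (v + (k : ZMod (2 * k))) k
  rw [add_sub_cancel_right, ZMod.val_natCast_half] at this
  unfold circPartIndex
  split_ifs <;> first | omega | decide

lemma circPartIndex_val_eq_zero_iff (v : ZMod (2 * k)) :
    circPartIndex k v.val = 0 ↔ v = 0 ∨ v = k := by
  rw [circPartIndex_eq_zero_iff, ZMod.val_eq_zero,
    ZMod.val_eq_iff_eq_natCast (by have := NeZero.pos k; omega)]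

lemma circPart_add (j t : ZMod (2 * k)) :
    circPart k (j + t) = fun i => (circPart k j i).image (· + t) := by
  funext i
  ext x
  simp only [mem_circPart_iff, mem_image]
  constructor
  · intro hx
    exact ⟨x - t, by rwa [sub_sub, add_comm t], sub_add_cancel x t⟩
  · rintro ⟨y, hy, rfl⟩
    rwa [add_sub_add_right_eq_sub]

lemma circPart_add_natCast (j : ZMod (2 * k)) :
    circPart k (j + k) = circPart k j ∘ Equiv.swap 1 2 := by
  funext i
  ext x
  simp only [Function.comp_apply, mem_circPart_iff]
  rw [← sub_add_cancel (x - j) k, sub_sub, circPartIndex_val_add_natCast,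
    Equiv.apply_eq_iff_eq]

lemma isEdge_circPart_add_natCast_iff (j : ZMod (2 * k)) (e : Finset (ZMod (2 * k))) :
    IsEdge (circPart k (j + k)) e ↔ IsEdge (circPart k j) e := by
  rw [circPart_add_natCast]
  exact isEdge_comp_perm _ _ e

lemma isEdge_circPart_add_image_iff (j t : ZMod (2 * k)) (e : Finset (ZMod (2 * k))) :
    IsEdge (circPart k (j + t)) (e.image (· + t)) ↔ IsEdge (circPart k j) e := by
  rw [circPart_add]
  exact isEdge_image_iff (add_left_injective t) _ e

lemma isEdge_circPart_triple_iff (j : ZMod (2 * k)) {x y z : ZMod (2 * k)}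
    (hxy : x ≠ y) (hxz : x ≠ z) (hyz : y ≠ z) :
    IsEdge (circPart k j) {x, y, z} ↔
      circPartIndex k (x - j).val ≠ circPartIndex k (y - j).val ∧
      circPartIndex k (x - j).val ≠ circPartIndex k (z - j).val ∧
      circPartIndex k (y - j).val ≠ circPartIndex k (z - j).val :=
  isEdge_triple_iff _ _ (fun x i => mem_circPart_iff j x i) hxy hxz hyz

lemma card_filter_univ_eq_two_mul_card_filter_range (P : ZMod (2 * k) → Prop) [DecidablePred P]
    (hP : ∀ x, P (x + k) ↔ P x) : #{x | P x} = 2 * #((range k).filter fun i : ℕ => P i) := by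
  have hrange : #{x | P x} = #((range (2 * k)).filter fun i : ℕ => P i) := by
    refine card_nbij' ZMod.val Nat.cast ?_ ?_ ?_ ?_
    · intro x hx
      simp_all [ZMod.val_lt]
    · intro i hi
      simp_all
    · intro x _
      simp
    · intro i hi
      exact ZMod.val_natCast_of_lt (mem_range.1 (mem_filter.1 hi).1)
  have hsplit : range (2 * k) = range (k + k) := by rw [two_mul]
  have hshift : ∑ i ∈ range k, (if P ((k + i : ℕ) : ZMod (2 * k)) then 1 else 0) =
      ∑ i ∈ range k, if P i then 1 else 0 :=
    sum_congr rfl fun i _ => by simp only [Nat.cast_add, add_comm (k : ZMod (2 * k)), hP]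
  rw [hrange, card_filter, card_filter, hsplit, sum_range_add, hshift]
  omega

lemma two_mul_coverCount (e : Finset (ZMod (2 * k))) :
    2 * coverCount k e = #{j | IsEdge (circPart k j) e} :=
  (card_filter_univ_eq_two_mul_card_filter_range (fun j => IsEdge (circPart k j) e)
    fun j => isEdge_circPart_add_natCast_iff j e).symm

lemma coverCount_image_add (e : Finset (ZMod (2 * k))) (t : ZMod (2 * k)) :
    coverCount k (e.image (· + t)) = coverCount k e := by
  have h : #{j | IsEdge (circPart k j) (e.image (· + t))} = #{j | IsEdge (circPart k j) e} := by
    refine card_equiv (Equiv.subRight t) fun j => ?_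
    simp only [mem_filter, mem_univ, true_and, Equiv.subRight_apply]
    rw [← isEdge_circPart_add_image_iff (j - t) t, sub_add_cancel]
  have := two_mul_coverCount (e.image (· + t))
  have := two_mul_coverCount e
  omega

lemma isEdge_circPart_opposite_iff (j x a : ZMod (2 * k)) (hax : a ≠ x)
    (hak : a ≠ x + k) :
    IsEdge (circPart k j) {x, x + k, a} ↔ circPartIndex k (a - j).val = 0 := by
  have hk0 : (k : ZMod (2 * k)) ≠ 0 := by
    rw [← ZMod.val_ne_zero, ZMod.val_natCast_half]
    exact NeZero.ne k
  have hnot : ¬(circPartIndex k (x - j).val = 0 ∧ circPartIndex k (a - j).val = 0) := by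
    rw [circPartIndex_val_eq_zero_iff, circPartIndex_val_eq_zero_iff]
    rintro ⟨hx | hx, ha | ha⟩
    · exact hax (by linear_combination ha - hx)
    · exact hak (by linear_combination ha - hx)
    · exact hak (by linear_combination ha - hx - ZMod.natCast_half_add_self k)
    · exact hax (by linear_combination ha - hx)
  rw [isEdge_circPart_triple_iff j (by simpa using hk0) hax.symm hak.symm,
    show x + k - j = x - j + k by ring, circPartIndex_val_add_natCast]
  -- `p`, `swap p` and `q` are pairwise distinct iff `q = 0 ≠ p`
  revert hnot
  generalize circPartIndex k (x - j).val = p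
  generalize circPartIndex k (a - j).val = q
  revert p q
  decide

lemma filter_isEdge_circPart_opposite (x a : ZMod (2 * k)) (hax : a ≠ x) (hak : a ≠ x + k) :
    ((range k).filter fun j : ℕ => IsEdge (circPart k j) {x, x + k, a}) = {a.val % k} := by
  ext j
  simp only [mem_filter, mem_range, mem_singleton, isEdge_circPart_opposite_iff _ _ _ hax hak,
    circPartIndex_eq_zero_iff]
  have := Nat.mod_eq_or_mod_add_eq_of_lt_two_mul a.val_lt
  have := Nat.mod_lt a.val (NeZero.pos k)
  by_cases hj : j < k
  · have := ZMod.val_sub_add_val_eq_or a j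
    rw [ZMod.val_natCast_of_lt (by omega)] at this
    have := (a - j).val_lt
    omega
  · omega

lemma filter_isEdge_circPart_zero_natCast_natCast {b c : ℕ} (hb0 : 0 < b) (hbk : b < k)
    (hkc : k < c) (hc : c < 2 * k) :
    ((range k).filter fun j : ℕ =>
        IsEdge (circPart k j) {0, (b : ZMod (2 * k)), (c : ZMod (2 * k))}) =
      if c < k + b then {0, b, c - k} else {0} := by
  have hbval : (b : ZMod (2 * k)).val = b := ZMod.val_natCast_of_lt (by omega)
  have hcval : (c : ZMod (2 * k)).val = c := ZMod.val_natCast_of_lt hc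
  have h0b : (0 : ZMod (2 * k)) ≠ b := by
    rw [ne_comm, ← ZMod.val_ne_zero, hbval]
    omega
  have h0c : (0 : ZMod (2 * k)) ≠ c := by
    rw [ne_comm, ← ZMod.val_ne_zero, hcval]
    omega
  have hbc : (b : ZMod (2 * k)) ≠ c := fun h => by
    have := congrArg ZMod.val h
    omega
  ext j
  by_cases hj : j < k
  · have hjval : (j : ZMod (2 * k)).val = j := ZMod.val_natCast_of_lt (by omega)
    have h0 := ZMod.val_sub_add_val_eq_or 0 (j : ZMod (2 * k))
    have hb := ZMod.val_sub_add_val_eq_or (b : ZMod (2 * k)) j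
    have hc := ZMod.val_sub_add_val_eq_or (c : ZMod (2 * k)) j
    rw [hjval, ZMod.val_zero] at h0
    rw [hjval, hbval] at hb
    rw [hjval, hcval] at hc
    have := (0 - (j : ZMod (2 * k))).val_lt
    have := ((b : ZMod (2 * k)) - j).val_lt
    have := ((c : ZMod (2 * k)) - j).val_lt
    simp only [mem_filter, mem_range, hj, true_and, isEdge_circPart_triple_iff _ h0b h0c hbc,
      circPartIndex_ne_iff]
    split_ifs <;> simp only [mem_insert, mem_singleton] <;> omega
  · split_ifs <;> simp only [mem_filter, mem_range, hj, false_and, false_iff, mem_insert,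
      mem_singleton] <;>
      omega

lemma coverCount_zero_natCast_natCast {b c : ℕ} (hb0 : 0 < b) (hbk : b < k) (hkc : k < c)
    (hc : c < 2 * k) :
    coverCount k {0, (b : ZMod (2 * k)), (c : ZMod (2 * k))} =
      if k < c ∧ c < k + b then 3 else 1 := by
  rw [coverCount, filter_isEdge_circPart_zero_natCast_natCast hb0 hbk hkc hc]
  by_cases hcase : c < k + b
  · rw [if_pos hcase, if_pos ⟨hkc, hcase⟩, card_eq_three]
    exact ⟨0, b, c - k, by omega, by omega, by omega, rfl⟩
  · rw [if_neg hcase, if_neg fun h => hcase h.2, card_singleton]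

lemma odd_coverCount_zero_natCast_natCast {b c : ℕ} (hb0 : 0 < b) (hc0 : 0 < c) (hb : b < 2 * k)
    (hc : c < 2 * k) (hbk : b ≠ k) (hck : c ≠ k) (hbc : b ≠ c) (hcb : c ≠ b + k)
    (hbc' : b ≠ c + k) :
    Odd (coverCount k {0, (b : ZMod (2 * k)), (c : ZMod (2 * k))}) := by
  wlog hlt : b < c generalizing b c
  · rw [pair_comm]
    exact this hc0 hb0 hc hb hck hbk hbc.symm hbc' hcb (by omega)
  have hnormal : ∀ {b c : ℕ}, 0 < b → b < k → k < c → c < 2 * k →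
      Odd (coverCount k {0, (b : ZMod (2 * k)), (c : ZMod (2 * k))}) := fun hb0 hbk hkc hc => by
    rw [coverCount_zero_natCast_natCast hb0 hbk hkc hc]
    split_ifs <;> decide
  have h2k : ((2 * k : ℕ) : ZMod (2 * k)) = 0 := ZMod.natCast_self _
  by_cases hkc : k < c
  · rcases lt_or_gt_of_ne hbk with hbk | hkb
    · exact hnormal hb0 hbk hkc hc
    · have hrot : ({0, (b : ZMod (2 * k)), (c : ZMod (2 * k))} : Finset _) =
          ({0, ((2 * k - c : ℕ) : ZMod (2 * k)), ((2 * k + b - c : ℕ) : ZMod (2 * k))} :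
            Finset _).image (· + (c : ZMod (2 * k))) := by
        simp only [image_insert, image_singleton, Nat.cast_sub hc.le,
          Nat.cast_sub (by omega : c ≤ 2 * k + b), Nat.cast_add, h2k, zero_add, sub_add_cancel,
          zero_sub, neg_add_cancel]
        rw [pair_comm, insert_comm]
      rw [hrot, coverCount_image_add]
      exact hnormal (by omega) (by omega) (by omega) (by omega)
  · have hrot : ({0, (b : ZMod (2 * k)), (c : ZMod (2 * k))} : Finset _) =
        ({0, ((c - b : ℕ) : ZMod (2 * k)), ((2 * k - b : ℕ) : ZMod (2 * k))} : Finset _).image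
          (· + (b : ZMod (2 * k))) := by
      simp only [image_insert, image_singleton, Nat.cast_sub hlt.le, Nat.cast_sub hb.le, h2k,
        zero_add, sub_add_cancel, zero_sub, neg_add_cancel]
      rw [insert_comm, pair_comm]
    rw [hrot, coverCount_image_add]
    exact hnormal (by omega) (by omega) (by omega) (by omega)

lemma odd_coverCount_opposite (x a : ZMod (2 * k)) (hax : a ≠ x) (hak : a ≠ x + k) :
    Odd (coverCount k {x, x + k, a}) := by
  rw [coverCount, filter_isEdge_circPart_opposite x a hax hak, card_singleton]
  exact odd_one

lemma odd_coverCount_of_not_opposite {x y z : ZMod (2 * k)} (hxy : x ≠ y) (hxz : x ≠ z)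
    (hyz : y ≠ z) (hy : y ≠ x + k) (hz : z ≠ x + k) (hzy : z ≠ y + k) :
    Odd (coverCount k {x, y, z}) := by
  have hb : (((y - x).val : ℕ) : ZMod (2 * k)) = y - x := ZMod.natCast_zmod_val _
  have hc : (((z - x).val : ℕ) : ZMod (2 * k)) = z - x := ZMod.natCast_zmod_val _
  have hrot : ({x, y, z} : Finset (ZMod (2 * k))) =
      ({0, (((y - x).val : ℕ) : ZMod (2 * k)), (((z - x).val : ℕ) : ZMod (2 * k))} :
        Finset _).image (· + x) := by
    simp only [image_insert, image_singleton, hb, hc, zero_add, sub_add_cancel]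
  rw [hrot, coverCount_image_add]
  have hk : k < 2 * k := by have := NeZero.pos k; omega
  refine odd_coverCount_zero_natCast_natCast (ZMod.val_pos.2 (sub_ne_zero.2 hxy.symm))
    (ZMod.val_pos.2 (sub_ne_zero.2 hxz.symm)) (ZMod.val_lt _) (ZMod.val_lt _) ?_ ?_ ?_ ?_ ?_
  · intro h
    have := (ZMod.val_eq_iff_eq_natCast hk).1 h
    exact hy (by linear_combination this)
  · intro h
    have := (ZMod.val_eq_iff_eq_natCast hk).1 h
    exact hz (by linear_combination this)
  · intro h
    have := congrArg (Nat.cast : ℕ → ZMod (2 * k)) h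
    rw [hb, hc] at this
    exact hyz (by linear_combination this)
  · intro h
    have := congrArg (Nat.cast : ℕ → ZMod (2 * k)) h
    push_cast [hb, hc] at this
    exact hzy (by linear_combination this)
  · intro h
    have := congrArg (Nat.cast : ℕ → ZMod (2 * k)) h
    push_cast [hb, hc] at this
    exact hzy (by linear_combination -this - ZMod.natCast_half_add_self k)

lemma odd_coverCount (e : Finset (ZMod (2 * k))) (he : #e = 3) : Odd (coverCount k e) := by
  obtain ⟨x, y, z, hxy, hxz, hyz, rfl⟩ := card_eq_three.1 he
  by_cases hy : y = x + k
  · subst hy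
    exact odd_coverCount_opposite x z hxz.symm hyz.symm
  by_cases hz : z = x + k
  · subst hz
    rw [pair_comm]
    exact odd_coverCount_opposite x y hxy.symm hyz
  by_cases hzy : z = y + k
  · subst hzy
    rw [insert_comm, pair_comm]
    exact odd_coverCount_opposite y x hxy hxz
  exact odd_coverCount_of_not_opposite hxy hxz hyz hy hz hzy

end circPart

theorem stmt1 (k : ℕ) (hk : 2 ≤ k) :
    (∀ e : Finset (ZMod (2 * k)), e.card = 3 →
      Odd (((Finset.range k).filter fun i : ℕ => IsEdge (circPart k (i : ZMod (2 * k))) e).card)) ∧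
    (∀ i a : ℕ, a < 2 * k →
      (a : ZMod (2 * k)) ≠ (i : ZMod (2 * k)) →
      (a : ZMod (2 * k)) ≠ (i : ZMod (2 * k)) + (k : ZMod (2 * k)) →
      ((Finset.range k).filter fun j : ℕ =>
          IsEdge (circPart k (j : ZMod (2 * k)))
            {(i : ZMod (2 * k)), (i : ZMod (2 * k)) + (k : ZMod (2 * k)), (a : ZMod (2 * k))}) =
        {a % k}) ∧
    (∀ b c : ℕ, 0 < b → b < k → k < c → c < 2 * k → c ≠ b + k →
      (((Finset.range k).filter fun i : ℕ =>
          IsEdge (circPart k (i : ZMod (2 * k)))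
            {(0 : ZMod (2 * k)), (b : ZMod (2 * k)), (c : ZMod (2 * k))}).card) =
        if k < c ∧ c < k + b then 3 else 1) := by
  have : NeZero k := ⟨by omega⟩
  refine ⟨odd_coverCount, fun i a ha hai hak => ?_,
    fun b c hb0 hbk hkc hc _ => coverCount_zero_natCast_natCast hb0 hbk hkc hc⟩
  rw [filter_isEdge_circPart_opposite _ _ hai hak, ZMod.val_natCast_of_lt ha]
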